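/- Let 𝕏 be an agenda over m issues and F an aggregation mechanism for 𝕏 over n voters with DI(F) ≤ δ. Then there exists an independent aggregation mechanism H for 𝕏 over n voters such that d(F,H) ≤ 2mδ. -/

import Mathlib

namespace JudgementAggregation

open Finset

open Classical in
noncomputable def prob {α : Type*} (s : Finset α) (P : α → Prop) : ℝ :=
  ((s.filter P).card : ℝ) / s.card

abbrev Opinion (m : ℕ) := Fin m → Bool
abbrev Profile (m n : ℕ) := Fin n → Opinion m
abbrev Mechanism (m n : ℕ) := Profile m n → Opinion m

/-- The column of all voters' answers on issue `j`. -/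
def col {m n : ℕ} (Y : Profile m n) (j : Fin m) : Fin n → Bool := fun i => Y i j

/-- The set of profiles all of whose rows are consistent opinions (i.e. the set 𝕏^n). -/
def profiles {m : ℕ} (X : Finset (Opinion m)) (n : ℕ) : Finset (Profile m n) :=
  Fintype.piFinset fun _ => X

/-- Inconsistency index: probability (uniform over 𝕏^n) that the aggregated opinion
is inconsistent. -/
noncomputable def IC {m n : ℕ} (X : Finset (Opinion m)) (F : Mechanism m n) : ℝ :=
  prob (profiles X n) (fun Y => F Y ∉ X)

/-- Distance between mechanisms: probability (uniform over 𝕏^n) of disagreement. -/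
noncomputable def mdist {m n : ℕ} (X : Finset (Opinion m)) (F G : Mechanism m n) : ℝ :=
  prob (profiles X n) (fun Y => F Y ≠ G Y)

/-- `F` is independent: on consistent profiles, each issue is aggregated from its own column. -/
def Independent {m n : ℕ} (X : Finset (Opinion m)) (F : Mechanism m n) : Prop :=
  ∃ f : Fin m → (Fin n → Bool) → Bool, ∀ Y ∈ profiles X n, ∀ j, F Y j = f j (col Y j)

open Classical in
/-- Dependency index of issue `j`:
`E_X [ Pr_Y [ (F X)^j ≠ (F Y)^j | Y^j = X^j ] ]`, everything uniform over 𝕏^n. -/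
noncomputable def DIj {m n : ℕ} (X : Finset (Opinion m)) (F : Mechanism m n) (j : Fin m) : ℝ :=
  (∑ Y ∈ profiles X n,
      prob ((profiles X n).filter (fun Z => col Z j = col Y j)) (fun Z => F Z j ≠ F Y j))
    / ((profiles X n).card : ℝ)

/-- Dependency index: the maximum of the issue-wise dependency indices. -/
noncomputable def DI {m n : ℕ} (X : Finset (Opinion m)) (F : Mechanism m n) : ℝ :=
  ⨆ j : Fin m, DIj X F j

/-! Decide issue `j` by the majority of `F`'s answers on `j` over all profiles with the same
`j`-th column. This is independent, and wherever `F` disagrees with it at `Y`, at least half of the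
profiles sharing `Y`'s column disagree with `F Y` on `j`; hence the disagreement probability on
issue `j` is at most `2 DI^j(F)`, and a union bound over the `m` issues gives `2mδ`. -/

lemma prob_eq_card_filter_div {α : Type*} (s : Finset α) (P : α → Prop) [DecidablePred P] :
    prob s P = (#(s.filter P) : ℝ) / #s := by
  unfold prob
  congr!

lemma prob_nonneg {α : Type*} (s : Finset α) (P : α → Prop) : 0 ≤ prob s P := by
  unfold prob
  positivity

lemma prob_congr {α : Type*} {s : Finset α} {P Q : α → Prop} (h : ∀ x ∈ s, P x ↔ Q x) :
    prob s P = prob s Q := by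
  classical
  rw [prob_eq_card_filter_div, prob_eq_card_filter_div, Finset.filter_congr h]

lemma prob_exists_le_sum {α ι : Type*} [Fintype ι] (s : Finset α) (P : ι → α → Prop) :
    prob s (fun x => ∃ i, P i x) ≤ ∑ i, prob s (P i) := by
  classical
  simp only [prob_eq_card_filter_div, ← Finset.sum_div]
  gcongr
  have hsub : s.filter (fun x => ∃ i, P i x) ⊆ Finset.univ.biUnion fun i => s.filter (P i) := by
    intro x hx
    obtain ⟨hxs, i, hi⟩ := Finset.mem_filter.mp hx
    exact Finset.mem_biUnion.mpr ⟨i, Finset.mem_univ i, Finset.mem_filter.mpr ⟨hxs, hi⟩⟩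
  exact_mod_cast (Finset.card_le_card hsub).trans Finset.card_biUnion_le

def majority {α : Type*} (T : Finset α) (g : α → Bool) : Bool :=
  decide (#T ≤ 2 * #{z ∈ T | g z = true})

lemma card_le_two_mul_card_filter_ne_of_ne_majority {α : Type*} {T : Finset α} {g : α → Bool}
    {y : α} (hy : g y ≠ majority T g) : #T ≤ 2 * #{z ∈ T | g z ≠ g y} := by
  have hsplit := T.card_filter_add_card_filter_not (fun z => g z = true)
  unfold majority at hy
  cases hgy : g y
  · have hmaj : #T ≤ 2 * #{z ∈ T | g z = true} := by simpa [hgy] using hy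
    simpa only [ne_eq, Bool.not_eq_false] using hmaj
  · have hmaj : ¬ #T ≤ 2 * #{z ∈ T | g z = true} := by simpa [hgy] using hy
    simp only [ne_eq]
    omega

lemma one_le_two_mul_prob_ne_of_ne_majority {α : Type*} {T : Finset α} {g : α → Bool} {y : α}
    (hyT : y ∈ T) (hy : g y ≠ majority T g) : 1 ≤ 2 * prob T (fun z => g z ≠ g y) := by
  have hT : (0 : ℝ) < #T := by exact_mod_cast Finset.card_pos.mpr ⟨y, hyT⟩
  rw [prob_eq_card_filter_div, mul_div_assoc', le_div_iff₀ hT, one_mul]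
  exact_mod_cast card_le_two_mul_card_filter_ne_of_ne_majority hy

lemma prob_ne_majority_fiber_le {α κ : Type*} [DecidableEq κ] (S : Finset α) (key : α → κ)
    (g : α → Bool) :
    prob S (fun y => g y ≠ majority {z ∈ S | key z = key y} g) ≤
      2 * ((∑ y ∈ S, prob {z ∈ S | key z = key y} (fun z => g z ≠ g y)) / #S) := by
  classical
  calc prob S (fun y => g y ≠ majority {z ∈ S | key z = key y} g)
      = (∑ y ∈ S, if g y ≠ majority {z ∈ S | key z = key y} g then (1 : ℝ) else 0) / #S := by
        rw [prob_eq_card_filter_div, Finset.sum_boole]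
    _ ≤ (∑ y ∈ S, 2 * prob {z ∈ S | key z = key y} (fun z => g z ≠ g y)) / #S := by
        gcongr with y hyS
        split_ifs with hy
        · exact one_le_two_mul_prob_ne_of_ne_majority (Finset.mem_filter.mpr ⟨hyS, rfl⟩) hy
        · positivity [prob_nonneg {z ∈ S | key z = key y} (fun z => g z ≠ g y)]
    _ = _ := by rw [← Finset.mul_sum, mul_div_assoc]

lemma DIj_le_DI {m n : ℕ} (X : Finset (Opinion m)) (F : Mechanism m n) (j : Fin m) :
    DIj X F j ≤ DI X F :=
  le_ciSup (Set.finite_range _).bddAbove j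

def columnMajority {m n : ℕ} (X : Finset (Opinion m)) (F : Mechanism m n) : Mechanism m n :=
  fun Y j => majority {Z ∈ profiles X n | col Z j = col Y j} (F · j)

lemma columnMajority_independent {m n : ℕ} (X : Finset (Opinion m)) (F : Mechanism m n) :
    Independent X (columnMajority X F) :=
  ⟨fun j c => majority {Z ∈ profiles X n | col Z j = c} (F · j), fun _ _ _ => rfl⟩

lemma prob_ne_columnMajority_le {m n : ℕ} (X : Finset (Opinion m)) (F : Mechanism m n)
    (j : Fin m) :
    prob (profiles X n) (fun Y => F Y j ≠ columnMajority X F Y j) ≤ 2 * DIj X F j := by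
  classical
  rw [DIj]
  unfold columnMajority
  convert prob_ne_majority_fiber_le (profiles X n) (col · j) (F · j)

theorem DI_close_independent_general (m n : ℕ) (X : Finset (Opinion m))
    (F : Mechanism m n) (δ : ℝ) (hDI : DI X F ≤ δ) :
    ∃ H : Mechanism m n, Independent X H ∧ mdist X F H ≤ 2 * (m : ℝ) * δ := by
  refine ⟨columnMajority X F, columnMajority_independent X F, ?_⟩
  calc mdist X F (columnMajority X F)
      = prob (profiles X n) (fun Y => ∃ j, F Y j ≠ columnMajority X F Y j) :=
        prob_congr fun _ _ => Function.ne_iff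
    _ ≤ ∑ j, prob (profiles X n) (fun Y => F Y j ≠ columnMajority X F Y j) :=
        prob_exists_le_sum _ _
    _ ≤ ∑ _j : Fin m, 2 * δ := by
        gcongr with j
        linarith [prob_ne_columnMajority_le X F j, DIj_le_DI X F j]
    _ = 2 * m * δ := by
        rw [Finset.sum_const, Finset.card_univ, Fintype.card_fin, nsmul_eq_mul]
        ring

/-- if `DI(F) ≤ δ` then `F` is `2mδ`-close to an independent mechanism. -/
theorem DI_close_independent (m n : ℕ) (X : Finset (Opinion m)) (hne : X.Nonempty)
    (F : Mechanism m n) (δ : ℝ) (hDI : DI X F ≤ δ) :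
    ∃ H : Mechanism m n, Independent X H ∧ mdist X F H ≤ 2 * (m : ℝ) * δ :=
  DI_close_independent_general m n X F δ hDI

end JudgementAggregation
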